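/- Let N ∈ ℕ, let f₁,…,f_N : [0,1] → [0,1] and g₁,…,g_N : [0,1] → ℝ be Lebesgue measurable functions satisfying hypotheses (H₁), (H₂) with constant K, and (H₃), and let L be the largest m ∈ {1,…,N} such that some intersection f_{n₁}([0,1]) ∩ ⋯ ∩ f_{n_m}([0,1]) with n₁ < ⋯ < n_m has positive Lebesgue measure. If |g_n(x)| < (1/(KL)) |f_n'(x)| for all n ∈ {1,…,N} and almost all x ∈ [0,1], then Σ_{n=1}^N ∫_{[0,1]} |g_n(x)| dx < 1. -/

import Mathlib

/-!
Fix a small `ε > 0`. Where `f` has a nonzero approximate derivative `a`, most of every small ball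
around `x` lies in a thin cone of a rational slope `q ≈ a`; sorting such points by the slope, the
scale at which this starts, and a short interval, gives countably many measurable pieces on which
`f` expands distances by a factor `≈ |q|` and `f' ≈ q`. So `∫ |f'|` over a piece is at most
`(1 + O(ε))` times the measure of its image, and since almost every value is taken at most `K`
times, `∫ |fₙ'| ≤ (1 + O(ε)) K |Wₙ|` for measurable sets `Wₙ ⊆ fₙ([0,1])`. Almost every point lies
in at most `L` of the images, so `∑ |Wₙ| ≤ L`; letting `ε → 0` gives `∑ ∫ |fₙ'| ≤ K L`, and the
strict bound on `gₙ` makes the conclusion strict. The same pieces exhibit `f'` as an a.e. limit of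
countably-valued measurable functions, so it is measurable.
-/

open MeasureTheory Filter Set Topology
open scoped Classical

noncomputable abbrev μ01 : MeasureTheory.Measure ℝ := MeasureTheory.volume.restrict (Set.Icc 0 1)

/-- `x` is a Lebesgue density point of the set `S ⊆ ℝ`. -/
def DensityPt (S : Set ℝ) (x : ℝ) : Prop :=
  Tendsto (fun r : ℝ =>
      MeasureTheory.volume (S ∩ Metric.closedBall x r) / MeasureTheory.volume (Metric.closedBall x r))
    (𝓝[>] 0) (𝓝 1)

/-- `h` has the linear map `t ↦ a * t` as approximate differential at `x₀` (relative to `E`). -/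
def HasApproxDerivAt (E : Set ℝ) (h : ℝ → ℝ) (a : ℝ) (x₀ : ℝ) : Prop :=
  ∀ ε > 0, DensityPt {x | x ∈ E ∧ x ≠ x₀ ∧ |h x - h x₀ - a * (x - x₀)| / |x - x₀| < ε} x₀

noncomputable def approxDeriv (E : Set ℝ) (h : ℝ → ℝ) (x : ℝ) : ℝ :=
  if hd : ∃ a, HasApproxDerivAt E h a x then hd.choose else 0

open scoped ENNReal

lemma DensityPt.eventually_measure_closedBall_diff_le {S : Set ℝ} {x : ℝ} (hS : MeasurableSet S)
    (hd : DensityPt S x) {η : ℝ} (hη : 0 < η) :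
    ∀ᶠ r in 𝓝[>] 0, volume (Metric.closedBall x r \ S) ≤ ENNReal.ofReal (η * r) := by
  have hc : ENNReal.ofReal (1 - η / 2) < 1 := ENNReal.ofReal_lt_one.2 (by linarith)
  filter_upwards [hd.eventually (eventually_gt_nhds hc), self_mem_nhdsWithin] with r hr hr0
  set B := Metric.closedBall x r
  have hB : volume B = ENNReal.ofReal (2 * r) := Real.volume_closedBall x r
  have hBfin : volume B ≠ ∞ := hB ▸ ENNReal.ofReal_ne_top
  have hlow : ENNReal.ofReal (1 - η / 2) * volume B ≤ volume (S ∩ B) :=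
    (ENNReal.le_div_iff_mul_le (.inl (hB ▸ by simpa using hr0.out)) (.inl hBfin)).1 hr.le
  have hsplit : volume (B \ S) = volume B - volume (S ∩ B) := by
    rw [← measure_sdiff Set.inter_subset_right
      (hS.inter measurableSet_closedBall).nullMeasurableSet (measure_ne_top_of_subset
        Set.inter_subset_right hBfin), Set.sdiff_inter_self_eq_sdiff]
  calc volume (B \ S) ≤ volume B - ENNReal.ofReal (1 - η / 2) * volume B := by
        rw [hsplit]; exact tsub_le_tsub_left hlow _
    _ ≤ ENNReal.ofReal (η / 2) * volume B := by
        rw [tsub_le_iff_right, ← add_mul]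
        refine le_mul_of_one_le_left' ?_
        calc (1 : ℝ≥0∞) = ENNReal.ofReal (η / 2 + (1 - η / 2)) := by ring_nf; simp
          _ ≤ _ := ENNReal.ofReal_add_le
    _ = ENNReal.ofReal (η * r) := by
        rw [hB, ← ENNReal.ofReal_mul (by positivity)]; ring_nf

lemma exists_ne_mem_closedBall_of_measure_diff_le {S T : Set ℝ} {x r a b : ℝ} (ha : 0 ≤ a)
    (hb : 0 ≤ b) (hS : volume (Metric.closedBall x r \ S) ≤ ENNReal.ofReal a)
    (hT : volume (Metric.closedBall x r \ T) ≤ ENNReal.ofReal b) (hab : a + b < 2 * r) :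
    ∃ z ∈ Metric.closedBall x r, z ≠ x ∧ z ∈ S ∧ z ∈ T := by
  set B := Metric.closedBall x r \ {x}
  by_contra! hne
  have hcover : B ⊆ (Metric.closedBall x r \ S) ∪ (Metric.closedBall x r \ T) := by
    rintro z ⟨hz, hzx⟩
    by_cases hzS : z ∈ S
    · exact .inr ⟨hz, hne z hz hzx hzS⟩
    · exact .inl ⟨hz, hzS⟩
  have : volume B ≤ ENNReal.ofReal (a + b) := by
    grw [hcover, measure_union_le, hS, hT, ENNReal.ofReal_add ha hb]
  rw [measure_sdiff_null (measure_singleton x), Real.volume_closedBall] at this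
  exact absurd ((ENNReal.ofReal_le_ofReal_iff (by linarith)).1 this) (not_le.2 hab)

lemma Monotone.le_ofReal_mul_of_forall_rat {g : ℝ → ℝ≥0∞} (hg : Monotone g) {c r δ : ℝ}
    (hc : 0 ≤ c) (hr : r < δ) (h : ∀ ρ : ℚ, r < ρ → (ρ : ℝ) < δ → g ρ ≤ ENNReal.ofReal (c * ρ)) :
    g r ≤ ENNReal.ofReal (c * r) := by
  refine ENNReal.le_of_forall_pos_le_add fun ε hε _ => ?_
  have hε' : (0 : ℝ) < ε / (c + 1) := by positivity
  obtain ⟨ρ, hrρ, hρ⟩ := exists_rat_btwn (lt_min hr (lt_add_of_pos_right r hε'))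
  have hcρ : c * ρ ≤ c * r + ε := by
    have : c * (ε / (c + 1)) ≤ ε := by
      rw [mul_div_assoc', div_le_iff₀ (by linarith)]; nlinarith [hε.le]
    nlinarith [hρ.trans_le (min_le_right _ _)]
  calc g r ≤ g ρ := hg hrρ.le
    _ ≤ ENNReal.ofReal (c * ρ) := h ρ hrρ (hρ.trans_le (min_le_left _ _))
    _ ≤ ENNReal.ofReal (c * r) + ε := by
        simpa using (ENNReal.ofReal_le_ofReal hcρ).trans ENNReal.ofReal_add_le

def slopeCone (f : ℝ → ℝ) (q τ x : ℝ) : Set ℝ :=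
  {y | |f y - f x - q * (y - x)| ≤ τ * |y - x|}

def coneRegularSet (E : Set ℝ) (f : ℝ → ℝ) (q τ δ : ℝ) : Set ℝ :=
  {x | x ∈ E ∧ ∀ r, 0 < r → r < δ →
    volume (Metric.closedBall x r \ slopeCone f q τ x) ≤ ENNReal.ofReal (r / 8)}

section cones

variable {E : Set ℝ} {f : ℝ → ℝ}

lemma abs_sub_le_of_mem_slopeCone {a b σ τ x z : ℝ} (ha : z ∈ slopeCone f a σ x)
    (hb : z ∈ slopeCone f b τ x) (hzx : z ≠ x) : |a - b| ≤ σ + τ := by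
  have hpos : 0 < |z - x| := abs_pos.2 (sub_ne_zero.2 hzx)
  refine le_of_mul_le_mul_right ?_ hpos
  calc |a - b| * |z - x| = |(f z - f x - b * (z - x)) - (f z - f x - a * (z - x))| := by
        rw [← abs_mul]; ring_nf
    _ ≤ |f z - f x - b * (z - x)| + |f z - f x - a * (z - x)| := abs_sub _ _
    _ ≤ τ * |z - x| + σ * |z - x| := add_le_add hb ha
    _ = (σ + τ) * |z - x| := by ring

lemma HasApproxDerivAt.eventually_measure_closedBall_diff_slopeCone_le {a x ε η : ℝ}
    (hE : MeasurableSet E) (hf : Measurable f) (h : HasApproxDerivAt E f a x) (hε : 0 < ε)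
    (hη : 0 < η) :
    ∀ᶠ r in 𝓝[>] 0,
      volume (Metric.closedBall x r \ slopeCone f a ε x) ≤ ENNReal.ofReal (η * r) := by
  set S := {y | y ∈ E ∧ y ≠ x ∧ |f y - f x - a * (y - x)| / |y - x| < ε}
  have hS : MeasurableSet S := hE.inter <| (measurableSet_singleton x).compl.inter <|
    measurableSet_lt (f := fun y => |f y - f x - a * (y - x)| / |y - x|) (by fun_prop)
      measurable_const
  have hsub : S ⊆ slopeCone f a ε x := fun y ⟨_, hyx, hy⟩ =>
    ((div_lt_iff₀ (abs_pos.2 (sub_ne_zero.2 hyx))).1 hy).le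
  filter_upwards [(h ε hε).eventually_measure_closedBall_diff_le hS hη] with r hr
  exact (measure_mono (Set.sdiff_subset_sdiff_right hsub)).trans hr

lemma slopeCone_subset_slopeCone {a q σ τ x : ℝ} (h : |a - q| ≤ τ) :
    slopeCone f a σ x ⊆ slopeCone f q (σ + τ) x := by
  intro y (hy : |f y - f x - a * (y - x)| ≤ σ * |y - x|)
  calc |f y - f x - q * (y - x)| = |(f y - f x - a * (y - x)) + (a - q) * (y - x)| := by ring_nf
    _ ≤ σ * |y - x| + |a - q| * |y - x| := by
        rw [← abs_mul]; exact (abs_add_le _ _).trans (add_le_add_left hy _)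
    _ ≤ (σ + τ) * |y - x| := by nlinarith [abs_nonneg (y - x)]

lemma measurable_measure_closedBall_diff_slopeCone (hf : Measurable f) (q τ r : ℝ) :
    Measurable fun x => volume (Metric.closedBall x r \ slopeCone f q τ x) := by
  have hS : MeasurableSet {p : ℝ × ℝ | p.2 ∈ Metric.closedBall p.1 r \ slopeCone f q τ p.1} :=
    (measurableSet_le (f := fun p : ℝ × ℝ => dist p.2 p.1) (by fun_prop)
      measurable_const).inter (measurableSet_le
        (f := fun p : ℝ × ℝ => |f p.2 - f p.1 - q * (p.2 - p.1)|)
        (g := fun p : ℝ × ℝ => τ * |p.2 - p.1|) (by fun_prop) (by fun_prop)).compl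
  exact measurable_measure_prodMk_left hS

lemma measurableSet_coneRegularSet (hE : MeasurableSet E) (hf : Measurable f) (q τ δ : ℝ) :
    MeasurableSet (coneRegularSet E f q τ δ) := by
  -- the defining condition only needs to be checked at rational radii
  have hrat : coneRegularSet E f q τ δ = E ∩ ⋂ (ρ : ℚ) (_ : 0 < (ρ : ℝ) ∧ (ρ : ℝ) < δ),
      {x | volume (Metric.closedBall x ρ \ slopeCone f q τ x) ≤ ENNReal.ofReal (ρ / 8)} := by
    ext x
    simp only [coneRegularSet, Set.mem_ofPred_eq, Set.mem_inter_iff, Set.mem_iInter]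
    refine and_congr_right fun _ => ⟨fun h ρ hρ => h ρ hρ.1 hρ.2, fun h r hr hrδ => ?_⟩
    have hmono : Monotone fun s => volume (Metric.closedBall x s \ slopeCone f q τ x) :=
      fun s t hst =>
        measure_mono (Set.sdiff_subset_sdiff_left (Metric.closedBall_subset_closedBall hst))
    simpa only [div_eq_inv_mul] using hmono.le_ofReal_mul_of_forall_rat (by norm_num) hrδ
      fun ρ hrρ hρδ => by simpa only [div_eq_inv_mul] using h ρ ⟨hr.trans hrρ, hρδ⟩
  rw [hrat]
  exact hE.inter <| .iInter fun ρ => .iInter fun _ =>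
    measurableSet_le (measurable_measure_closedBall_diff_slopeCone hf q τ ρ) measurable_const

lemma HasApproxDerivAt.abs_sub_le_of_mem_coneRegularSet {a q τ δ x : ℝ}
    (hE : MeasurableSet E) (hf : Measurable f) (h : HasApproxDerivAt E f a x)
    (hx : x ∈ coneRegularSet E f q τ δ) (hδ : 0 < δ) : |a - q| ≤ τ := by
  refine le_of_forall_pos_le_add fun ε hε => ?_
  obtain ⟨r, hr, hr0, hrδ⟩ :=
    ((h.eventually_measure_closedBall_diff_slopeCone_le hE hf hε one_pos).and
      (Ioo_mem_nhdsGT hδ)).exists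
  obtain ⟨z, -, hzx, hza, hzq⟩ := exists_ne_mem_closedBall_of_measure_diff_le (by positivity)
    (by positivity) hr (hx.2 r hr0 hrδ) (by linarith)
  linarith [abs_sub_le_of_mem_slopeCone hza hzq hzx]

lemma mem_slopeCone_of_mem_coneRegularSet {q τ δ x y : ℝ} (hτ : 0 ≤ τ)
    (hx : x ∈ coneRegularSet E f q τ δ) (hy : y ∈ coneRegularSet E f q τ δ)
    (hxy : |y - x| < δ / 2) : y ∈ slopeCone f q (3 * τ) x := by
  rcases eq_or_ne y x with rfl | hyx
  · simp [slopeCone]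
  set r := |y - x|
  have hr : 0 < r := abs_pos.2 (sub_ne_zero.2 hyx)
  have hball : Metric.closedBall x r ⊆ Metric.closedBall y (2 * r) := by
    refine Metric.closedBall_subset_closedBall' ?_
    rw [dist_comm, Real.dist_eq]; linarith
  obtain ⟨z, hz, -, hzx, hzy⟩ := exists_ne_mem_closedBall_of_measure_diff_le (by positivity)
    (by positivity) (hx.2 r hr (by linarith))
    ((measure_mono (Set.sdiff_subset_sdiff_left hball)).trans (hy.2 (2 * r) (by positivity)
      (by linarith))) (by linarith)
  have hzx' : |z - x| ≤ r := by simpa [Real.dist_eq] using hz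
  have hzy' : |z - y| ≤ 2 * r := by
    calc |z - y| = |(z - x) - (y - x)| := by ring_nf
      _ ≤ |z - x| + r := abs_sub _ _
      _ ≤ 2 * r := by linarith
  calc |f y - f x - q * (y - x)| = |(f z - f x - q * (z - x)) - (f z - f y - q * (z - y))| := by
        ring_nf
    _ ≤ τ * |z - x| + τ * |z - y| := (abs_sub _ _).trans (add_le_add hzx hzy)
    _ ≤ 3 * τ * r := by nlinarith

lemma HasApproxDerivAt.exists_mem_coneRegularSet {a x ε : ℝ}
    (hE : MeasurableSet E) (hf : Measurable f) (h : HasApproxDerivAt E f a x) (hx : x ∈ E)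
    (ha : a ≠ 0) (hε : 0 < ε) :
    ∃ q : ℚ, q ≠ 0 ∧ ∃ k : ℕ, x ∈ coneRegularSet E f q (ε * |(q : ℝ)|) (k + 1 : ℝ)⁻¹ := by
  have ha' : 0 < |a| := abs_pos.2 ha
  obtain ⟨q, hq⟩ := exists_rat_near a (show 0 < min (ε * |a| / 4) (|a| / 2) by positivity)
  have hq1 := hq.trans_le (min_le_left _ _)
  have hq2 := hq.trans_le (min_le_right _ _)
  have hqa : |a| / 2 ≤ |(q : ℝ)| := by linarith [abs_sub_abs_le_abs_sub a q]
  have hq0 : (q : ℝ) ≠ 0 := fun h0 => by rw [h0, abs_zero] at hqa; linarith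
  set τ := ε * |(q : ℝ)|
  have hcone : slopeCone f a (τ / 2) x ⊆ slopeCone f q τ x := by
    simpa using slopeCone_subset_slopeCone (f := f) (σ := τ / 2) (x := x)
      (show |a - q| ≤ τ / 2 by nlinarith)
  have hev := h.eventually_measure_closedBall_diff_slopeCone_le hE hf (by positivity : 0 < τ / 2)
    (by norm_num : (0 : ℝ) < 1 / 8)
  obtain ⟨δ, hδ, hδev⟩ := (nhdsGT_basis (0 : ℝ)).eventually_iff.1 hev
  obtain ⟨k, hk⟩ := exists_nat_one_div_lt (sub_pos.2 hδ)
  refine ⟨q, by exact_mod_cast hq0, k, hx, fun r hr hrk => ?_⟩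
  have hrδ : r ∈ Set.Ioo 0 δ := ⟨hr, by rw [one_div] at hk; linarith⟩
  calc volume (Metric.closedBall x r \ slopeCone f q τ x)
      ≤ volume (Metric.closedBall x r \ slopeCone f a (τ / 2) x) :=
        measure_mono (Set.sdiff_subset_sdiff_right hcone)
    _ ≤ ENNReal.ofReal (r / 8) := by simpa [div_eq_inv_mul, mul_comm] using hδev hrδ

end cones

lemma injOn_of_mul_abs_sub_le {f : ℝ → ℝ} {S : Set ℝ} {c : ℝ} (hc : 0 < c)
    (h : ∀ x ∈ S, ∀ y ∈ S, c * |y - x| ≤ |f y - f x|) : Set.InjOn f S := fun x hx y hy hxy => by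
  have := h x hx y hy
  rw [hxy, sub_self, abs_zero] at this
  by_contra hne
  linarith [mul_pos hc (abs_pos.2 (sub_ne_zero.2 (Ne.symm hne)))]

lemma ofReal_mul_volume_le_volume_image {f : ℝ → ℝ} {S : Set ℝ} {c : ℝ}
    (h : ∀ x ∈ S, ∀ y ∈ S, c * |y - x| ≤ |f y - f x|) :
    ENNReal.ofReal c * volume S ≤ volume (f '' S) := by
  rcases le_or_gt c 0 with hc | hc
  · simp [ENNReal.ofReal_of_nonpos hc]
  -- the inverse of `f` on `f '' S` is `c⁻¹`-Lipschitz
  have hleft : Set.LeftInvOn (Function.invFunOn f S) f S :=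
    (injOn_of_mul_abs_sub_le hc h).leftInvOn_invFunOn
  have hlip : LipschitzOnWith (Real.toNNReal c⁻¹) (Function.invFunOn f S) (f '' S) := by
    refine LipschitzOnWith.of_dist_le_mul ?_
    rintro _ ⟨x, hx, rfl⟩ _ ⟨y, hy, rfl⟩
    rw [hleft hx, hleft hy, Real.dist_eq, Real.dist_eq, Real.coe_toNNReal _ (by positivity),
      le_inv_mul_iff₀ hc]
    exact h y hy x hx
  have himage := hlip.hausdorffMeasure_image_le zero_le_one
  rw [hleft.image_image, ENNReal.rpow_one, hausdorffMeasure_real] at himage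
  calc ENNReal.ofReal c * volume S
      ≤ ENNReal.ofReal c * (ENNReal.ofReal c⁻¹ * volume (f '' S)) := by gcongr; exact himage
    _ = volume (f '' S) := by
        rw [← mul_assoc, ← ENNReal.ofReal_mul hc.le, mul_inv_cancel₀ hc.ne', ENNReal.ofReal_one,
          one_mul]

lemma abs_sub_lt_of_mem_Ico_mul {h x y : ℝ} {j : ℤ} (hx : x ∈ Set.Ico (j * h) ((j + 1) * h))
    (hy : y ∈ Set.Ico (j * h) ((j + 1) * h)) : |y - x| < h := by
  rw [abs_sub_lt_iff]; constructor <;> linarith [hx.1, hx.2, hy.1, hy.2]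

lemma mem_Ico_floor_mul {h : ℝ} (hh : 0 < h) (x : ℝ) :
    x ∈ Set.Ico (⌊x / h⌋ * h) ((⌊x / h⌋ + 1) * h) :=
  ⟨(le_div_iff₀ hh).1 (Int.floor_le _), (div_lt_iff₀ hh).1 (Int.lt_floor_add_one _)⟩

/-- The piece indexed by `(q, k, j)`: slope `q`, scale `(k + 1)⁻¹`, and the `j`-th interval of
length `(2 * (k + 1))⁻¹`, short enough for `mem_slopeCone_of_mem_coneRegularSet` to apply. -/
def slopePiece (E : Set ℝ) (f : ℝ → ℝ) (ε : ℝ) (p : ℚ × ℕ × ℤ) : Set ℝ :=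
  if p.1 = 0 then ∅ else
    coneRegularSet E f p.1 (ε * |(p.1 : ℝ)|) (p.2.1 + 1 : ℝ)⁻¹ ∩
      Set.Ico (p.2.2 * (2 * (p.2.1 + 1) : ℝ)⁻¹) ((p.2.2 + 1) * (2 * (p.2.1 + 1) : ℝ)⁻¹)

section slopePiece

variable {E : Set ℝ} {f : ℝ → ℝ} {ε : ℝ}

lemma slopePiece_subset_coneRegularSet {p : ℚ × ℕ × ℤ} :
    slopePiece E f ε p ⊆ coneRegularSet E f p.1 (ε * |(p.1 : ℝ)|) (p.2.1 + 1 : ℝ)⁻¹ := by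
  unfold slopePiece; split_ifs
  exacts [Set.empty_subset _, Set.inter_subset_left]

lemma slopePiece_subset (p : ℚ × ℕ × ℤ) : slopePiece E f ε p ⊆ E :=
  fun _ hx => (slopePiece_subset_coneRegularSet hx).1

lemma measurableSet_slopePiece (hE : MeasurableSet E) (hf : Measurable f) (p : ℚ × ℕ × ℤ) :
    MeasurableSet (slopePiece E f ε p) := by
  unfold slopePiece; split_ifs
  exacts [.empty, (measurableSet_coneRegularSet hE hf _ _ _).inter measurableSet_Ico]

lemma mul_abs_sub_le_of_mem_slopePiece (hε : 0 ≤ ε) {p : ℚ × ℕ × ℤ} {x y : ℝ}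
    (hx : x ∈ slopePiece E f ε p) (hy : y ∈ slopePiece E f ε p) :
    (1 - 3 * ε) * |(p.1 : ℝ)| * |y - x| ≤ |f y - f x| := by
  unfold slopePiece at hx hy
  split_ifs at hx hy
  · exact hx.elim
  have hxy : |y - x| < (p.2.1 + 1 : ℝ)⁻¹ / 2 := by
    have := abs_sub_lt_of_mem_Ico_mul hx.2 hy.2
    rwa [mul_inv, ← div_eq_inv_mul] at this
  have hcone : |f y - f x - p.1 * (y - x)| ≤ 3 * (ε * |(p.1 : ℝ)|) * |y - x| :=
    mem_slopeCone_of_mem_coneRegularSet (by positivity) hx.1 hy.1 hxy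
  have := abs_sub_abs_le_abs_sub ((p.1 : ℝ) * (y - x)) (p.1 * (y - x) - (f y - f x))
  rw [sub_sub_cancel, abs_mul, abs_sub_comm _ (f y - f x)] at this
  linarith

lemma ne_zero_of_mem_slopePiece {p : ℚ × ℕ × ℤ} {x : ℝ} (hx : x ∈ slopePiece E f ε p) :
    p.1 ≠ 0 := by
  unfold slopePiece at hx; split_ifs at hx with h
  exacts [hx.elim, h]

lemma HasApproxDerivAt.abs_sub_le_of_mem_slopePiece (hE : MeasurableSet E) (hf : Measurable f)
    {p : ℚ × ℕ × ℤ} {a x : ℝ} (h : HasApproxDerivAt E f a x) (hx : x ∈ slopePiece E f ε p) :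
    |a - p.1| ≤ ε * |(p.1 : ℝ)| :=
  h.abs_sub_le_of_mem_coneRegularSet hE hf (slopePiece_subset_coneRegularSet hx) (by positivity)

lemma HasApproxDerivAt.exists_mem_slopePiece (hE : MeasurableSet E) (hf : Measurable f)
    (hε : 0 < ε) {a x : ℝ} (h : HasApproxDerivAt E f a x) (hx : x ∈ E) (ha : a ≠ 0) :
    ∃ p, x ∈ slopePiece E f ε p := by
  obtain ⟨q, hq, k, hxq⟩ := h.exists_mem_coneRegularSet hE hf hx ha hε
  refine ⟨(q, k, ⌊x / (2 * (k + 1) : ℝ)⁻¹⌋), ?_⟩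
  simp only [slopePiece, if_neg hq]
  exact ⟨hxq, mem_Ico_floor_mul (by positivity) x⟩

end slopePiece

structure SlopePartition (E : Set ℝ) (f : ℝ → ℝ) (ε : ℝ) where
  piece : ℕ → Set ℝ
  slope : ℕ → ℝ
  measurableSet_piece (n : ℕ) : MeasurableSet (piece n)
  pairwise_disjoint : Pairwise (Function.onFun Disjoint piece)
  piece_subset (n : ℕ) : piece n ⊆ E
  injOn (n : ℕ) : Set.InjOn f (piece n)
  measure_le_image (n : ℕ) :
    ENNReal.ofReal ((1 - 3 * ε) * |slope n|) * volume (piece n) ≤ volume (f '' piece n)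
  abs_sub_slope_le (n : ℕ) {a x : ℝ} :
    x ∈ piece n → HasApproxDerivAt E f a x → |a - slope n| ≤ ε * |slope n|
  mem_iUnion {a x : ℝ} : x ∈ E → HasApproxDerivAt E f a x → a ≠ 0 → x ∈ ⋃ n, piece n

theorem nonempty_slopePartition {E : Set ℝ} {f : ℝ → ℝ} {ε : ℝ} (hE : MeasurableSet E)
    (hf : Measurable f) (hε : 0 < ε) (hε' : ε < 1 / 3) : Nonempty (SlopePartition E f ε) := by
  let e := (Denumerable.eqv (ℚ × ℕ × ℤ)).symm
  have hsub (n : ℕ) : disjointed (slopePiece E f ε ∘ e) n ⊆ slopePiece E f ε (e n) :=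
    disjointed_subset _ n
  have hlip (n : ℕ) : ∀ x ∈ disjointed (slopePiece E f ε ∘ e) n,
      ∀ y ∈ disjointed (slopePiece E f ε ∘ e) n,
        (1 - 3 * ε) * |((e n).1 : ℝ)| * |y - x| ≤ |f y - f x| := fun x hx y hy =>
    mul_abs_sub_le_of_mem_slopePiece hε.le (hsub n hx) (hsub n hy)
  refine ⟨⟨disjointed (slopePiece E f ε ∘ e), fun n => (e n).1,
    .disjointed fun n => measurableSet_slopePiece hE hf _, disjoint_disjointed _,
    fun n => (hsub n).trans (slopePiece_subset _), fun n => ?_,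
    fun n => ofReal_mul_volume_le_volume_image (hlip n),
    fun n _ _ hx h => h.abs_sub_le_of_mem_slopePiece hE hf (hsub n hx), fun hx h ha => ?_⟩⟩
  · rcases (disjointed (slopePiece E f ε ∘ e) n).eq_empty_or_nonempty with hempty | ⟨x, hx⟩
    · simp [hempty]
    have hq : ((e n).1 : ℝ) ≠ 0 := by exact_mod_cast ne_zero_of_mem_slopePiece (hsub n hx)
    exact injOn_of_mul_abs_sub_le (by have := abs_pos.2 hq; nlinarith) (hlip n)
  · obtain ⟨p, hp⟩ := h.exists_mem_slopePiece hE hf hε hx ha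
    obtain ⟨n, rfl⟩ := e.surjective p
    rw [iUnion_disjointed]
    exact Set.mem_iUnion.2 ⟨n, hp⟩

lemma tsum_measure_le_of_ae_encard_le {α ι : Type*} [MeasurableSpace α] {μ : Measure α}
    {s : ι → Set α} (hs : ∀ i, MeasurableSet (s i)) {M : ℕ}
    (h : ∀ᵐ y ∂μ, {i | y ∈ s i}.encard ≤ M) : ∑' i, μ (s i) ≤ M * μ (⋃ i, s i) := by
  set Z := toMeasurable μ {y | ¬{i | y ∈ s i}.encard ≤ M}
  have hZ : μ Z = 0 := by rw [measure_toMeasurable]; exact ae_iff.1 h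
  have hmult (y : α) : {i | y ∈ s i \ Z}.encard ≤ M := by
    by_cases hy : y ∈ Z
    · simp [hy]
    · refine (Set.encard_mono fun i hi => hi.1).trans ?_
      by_contra hM
      exact hy (subset_toMeasurable _ _ hM)
  have := Measure.le_iff'.1 (Measure.sum_restrict_le (μ := μ) (fun i => (hs i).diff
    (measurableSet_toMeasurable _ _)) hmult) Set.univ
  simp only [Measure.sum_apply _ .univ, Measure.smul_apply, Measure.restrict_apply_univ,
    nsmul_eq_mul] at this
  calc ∑' i, μ (s i) = ∑' i, μ (s i \ Z) := by simp only [measure_sdiff_null hZ]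
    _ ≤ M * μ (⋃ i, s i \ Z) := this
    _ ≤ M * μ (⋃ i, s i) := by gcongr; exact Set.sdiff_subset

lemma ae_encard_setOf_mem_le {α ι : Type*} [MeasurableSpace α] [Fintype ι] {μ : Measure α}
    {A : ι → Set α} {L : ℕ} (h : ∀ s : Finset ι, s.card = L + 1 → μ (⋂ i ∈ s, A i) = 0) :
    ∀ᵐ y ∂μ, {i | y ∈ A i}.encard ≤ L := by
  have hnull : μ (⋃ (s : Finset ι) (_ : s.card = L + 1), ⋂ i ∈ s, A i) = 0 :=
    measure_iUnion_null fun s => measure_iUnion_null fun hs => h s hs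
  filter_upwards [measure_eq_zero_iff_ae_notMem.1 hnull] with y hy
  classical
  have hset : {i | y ∈ A i} = ↑(Finset.univ.filter fun i => y ∈ A i) := by ext; simp
  rw [hset, Set.encard_coe_eq_coe_finsetCard, Nat.cast_le]
  by_contra! hlt
  obtain ⟨s, hs, hcard⟩ := Finset.exists_subset_card_eq hlt
  exact hy (Set.mem_iUnion₂.2
    ⟨s, hcard, Set.mem_iInter₂.2 fun i hi => (Finset.mem_filter.1 (hs hi)).2⟩)

lemma encard_setOf_mem_image_le {α β ι : Type*} {s : ι → Set α}
    (hs : Pairwise (Function.onFun Disjoint s)) (f : α → β) {S : Set α} (hS : ∀ i, s i ⊆ S)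
    (y : β) : {i | y ∈ f '' s i}.encard ≤ (S ∩ f ⁻¹' {y}).encard := by
  have hpre (i : {i | y ∈ f '' s i}) : ∃ x, x ∈ s i ∧ f x = y := i.2
  choose x hxs hxy using hpre
  refine ENat.card_le_card_of_injective (f := fun i => ⟨x i, hS i (hxs i), hxy i⟩) fun i j hij => ?_
  by_contra hne
  exact (hs (Subtype.coe_ne_coe.2 hne)).ne_of_mem (hxs i) (hxs j) (congrArg Subtype.val hij)

section approxDeriv

variable {E : Set ℝ} {f : ℝ → ℝ}

lemma hasApproxDerivAt_approxDeriv {x : ℝ} (h : ∃ a, HasApproxDerivAt E f a x) :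
    HasApproxDerivAt E f (approxDeriv E f x) x := by
  rw [approxDeriv, dif_pos h]; exact h.choose_spec

lemma abs_approxDeriv_le {x b : ℝ} (hb : 0 ≤ b) (h : ∀ a, HasApproxDerivAt E f a x → |a| ≤ b) :
    |approxDeriv E f x| ≤ b := by
  by_cases hx : ∃ a, HasApproxDerivAt E f a x
  · exact h _ (hasApproxDerivAt_approxDeriv hx)
  · simpa [approxDeriv, hx] using hb

lemma ae_hasApproxDerivAt_approxDeriv (hE : MeasurableSet E)
    (hdiff : volume {x ∈ E | ¬∃ a, HasApproxDerivAt E f a x} = 0) :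
    ∀ᵐ x ∂volume.restrict E, HasApproxDerivAt E f (approxDeriv E f x) x := by
  rw [ae_restrict_iff' hE]
  filter_upwards [measure_eq_zero_iff_ae_notMem.1 hdiff] with x hx hxE
  exact hasApproxDerivAt_approxDeriv (not_not.1 fun h => hx ⟨hxE, h⟩)

end approxDeriv

namespace SlopePartition

variable {E : Set ℝ} {f : ℝ → ℝ} {ε : ℝ} (P : SlopePartition E f ε)

lemma measurableSet_image (hf : Measurable f) (n : ℕ) : MeasurableSet (f '' P.piece n) :=
  (P.measurableSet_piece n).image_of_measurable_injOn hf (P.injOn n)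

lemma abs_approxDeriv_le (hε : 0 ≤ ε) {n : ℕ} {x : ℝ} (hx : x ∈ P.piece n) :
    |approxDeriv E f x| ≤ (1 + ε) * |P.slope n| :=
  _root_.abs_approxDeriv_le (by positivity) fun a ha => by
    linarith [P.abs_sub_slope_le n hx ha, abs_sub_abs_le_abs_sub a (P.slope n)]

lemma approxDeriv_eq_zero {x : ℝ} (hx : x ∈ E) (hd : HasApproxDerivAt E f (approxDeriv E f x) x)
    (hxP : x ∉ ⋃ n, P.piece n) : approxDeriv E f x = 0 :=
  not_not.1 fun h => hxP (P.mem_iUnion hx hd h)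

lemma lintegral_abs_approxDeriv_le (hE : MeasurableSet E)
    (hdiff : volume {x ∈ E | ¬∃ a, HasApproxDerivAt E f a x} = 0) (hε : 0 ≤ ε) (hε' : ε < 1 / 3) :
    ∫⁻ x in E, ENNReal.ofReal |approxDeriv E f x| ≤
      ENNReal.ofReal ((1 + ε) / (1 - 3 * ε)) * ∑' n, volume (f '' P.piece n) := by
  have h3 : 0 < 1 - 3 * ε := by linarith
  set g := fun x => ENNReal.ofReal |approxDeriv E f x|
  set U := ⋃ n, P.piece n
  have hsupp : g ≤ᵐ[volume.restrict E] U.indicator g := by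
    filter_upwards [ae_hasApproxDerivAt_approxDeriv hE hdiff, ae_restrict_mem hE] with x hd hxE
    by_cases hx : x ∈ U
    · rw [Set.indicator_of_mem hx]
    · simp [g, P.approxDeriv_eq_zero hxE hd hx]
  have hpiece (n : ℕ) : ∫⁻ x in P.piece n, g x ≤
      ENNReal.ofReal ((1 + ε) / (1 - 3 * ε)) * volume (f '' P.piece n) :=
    calc ∫⁻ x in P.piece n, g x ≤ ∫⁻ _ in P.piece n, ENNReal.ofReal ((1 + ε) * |P.slope n|) :=
          setLIntegral_mono' (P.measurableSet_piece n) fun x hx =>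
            ENNReal.ofReal_le_ofReal (P.abs_approxDeriv_le hε hx)
      _ = ENNReal.ofReal ((1 + ε) / (1 - 3 * ε)) *
            (ENNReal.ofReal ((1 - 3 * ε) * |P.slope n|) * volume (P.piece n)) := by
          rw [setLIntegral_const, ← mul_assoc, ← ENNReal.ofReal_mul (by positivity),
            ← mul_assoc (_ / _), div_mul_cancel₀ _ h3.ne']
      _ ≤ _ := by gcongr; exact P.measure_le_image n
  calc ∫⁻ x in E, g x ≤ ∫⁻ x in E, U.indicator g x := lintegral_mono_ae hsupp
    _ ≤ ∫⁻ x, U.indicator g x := setLIntegral_le_lintegral _ _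
    _ = ∫⁻ x in U, g x := lintegral_indicator (.iUnion P.measurableSet_piece) _
    _ ≤ ∑' n, ∫⁻ x in P.piece n, g x := lintegral_iUnion_le _ _
    _ ≤ ∑' n, ENNReal.ofReal ((1 + ε) / (1 - 3 * ε)) * volume (f '' P.piece n) :=
        ENNReal.tsum_le_tsum hpiece
    _ = _ := ENNReal.tsum_mul_left

lemma tsum_measure_image_le (hf : Measurable f) {K : ℕ}
    (hK : ∀ᵐ y, (E ∩ f ⁻¹' {y}).encard ≤ K) :
    ∑' n, volume (f '' P.piece n) ≤ K * volume (⋃ n, f '' P.piece n) :=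
  tsum_measure_le_of_ae_encard_le (P.measurableSet_image hf) <| hK.mono fun y hy =>
    (encard_setOf_mem_image_le P.pairwise_disjoint f P.piece_subset y).trans hy

noncomputable def slopeFun (x : ℝ) : ℝ := ∑' n, (P.piece n).indicator (fun _ => P.slope n) x

lemma slopeFun_eq_of_mem {n : ℕ} {x : ℝ} (hx : x ∈ P.piece n) : P.slopeFun x = P.slope n := by
  rw [slopeFun, tsum_eq_single n fun m hm => Set.indicator_of_notMem
    (fun hxm => (P.pairwise_disjoint hm).ne_of_mem hxm hx rfl) _, Set.indicator_of_mem hx]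

lemma slopeFun_eq_zero {x : ℝ} (hx : x ∉ ⋃ n, P.piece n) : P.slopeFun x = 0 := by
  simp only [Set.mem_iUnion, not_exists] at hx
  simp [slopeFun, Set.indicator_of_notMem (hx _)]

lemma measurable_slopeFun : Measurable P.slopeFun := by
  have hsum (x : ℝ) : Summable fun n => (P.piece n).indicator (fun _ => P.slope n) x := by
    by_cases hx : ∃ n, x ∈ P.piece n
    · obtain ⟨n, hn⟩ := hx
      exact (hasSum_single n fun m hm => Set.indicator_of_notMem
        (fun hxm => (P.pairwise_disjoint hm).ne_of_mem hxm hn rfl) _).summable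
    · push Not at hx
      simp [Set.indicator_of_notMem (hx _)]
  exact measurable_of_tendsto_metrizable (fun m => Finset.measurable_sum _ fun n _ =>
      measurable_const.indicator (P.measurableSet_piece n))
    (tendsto_pi_nhds.2 fun x => (hsum x).hasSum.tendsto_sum_nat)

lemma abs_slopeFun_sub_le (hε₀ : 0 ≤ ε) (hε : ε ≤ 1 / 2) {a x : ℝ} (hx : x ∈ E)
    (h : HasApproxDerivAt E f a x) :
    |P.slopeFun x - a| ≤ 2 * ε * |a| := by
  by_cases hxP : x ∈ ⋃ n, P.piece n
  · obtain ⟨n, hn⟩ := Set.mem_iUnion.1 hxP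
    have hslope := P.abs_sub_slope_le n hn h
    have : |P.slope n| ≤ 2 * |a| := by
      nlinarith [abs_sub_abs_le_abs_sub (P.slope n) a, abs_sub_comm a (P.slope n), abs_nonneg a]
    rw [P.slopeFun_eq_of_mem hn, abs_sub_comm]
    calc |a - P.slope n| ≤ ε * |P.slope n| := hslope
      _ ≤ ε * (2 * |a|) := mul_le_mul_of_nonneg_left this hε₀
      _ = 2 * ε * |a| := by ring
  · have ha : a = 0 := not_not.1 fun ha => hxP (P.mem_iUnion hx h ha)
    simp [P.slopeFun_eq_zero hxP, ha]

end SlopePartition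

theorem exists_lintegral_abs_approxDeriv_le {E : Set ℝ} {f : ℝ → ℝ} {ε : ℝ} {K : ℕ}
    (hE : MeasurableSet E) (hf : Measurable f)
    (hdiff : volume {x ∈ E | ¬∃ a, HasApproxDerivAt E f a x} = 0)
    (hK : ∀ᵐ y, (E ∩ f ⁻¹' {y}).encard ≤ K) (hε : 0 < ε) (hε' : ε < 1 / 3) :
    ∃ W ⊆ f '' E, MeasurableSet W ∧ ∫⁻ x in E, ENNReal.ofReal |approxDeriv E f x| ≤
      ENNReal.ofReal ((1 + ε) / (1 - 3 * ε)) * (K * volume W) := by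
  obtain ⟨P⟩ := nonempty_slopePartition hE hf hε hε'
  refine ⟨⋃ n, f '' P.piece n, Set.iUnion_subset fun n => Set.image_mono (P.piece_subset n),
    .iUnion (P.measurableSet_image hf), ?_⟩
  grw [P.lintegral_abs_approxDeriv_le hE hdiff hε.le hε', P.tsum_measure_image_le hf hK]

theorem aemeasurable_approxDeriv {E : Set ℝ} {f : ℝ → ℝ} (hE : MeasurableSet E)
    (hf : Measurable f) (hdiff : volume {x ∈ E | ¬∃ a, HasApproxDerivAt E f a x} = 0) :
    AEMeasurable (approxDeriv E f) (volume.restrict E) := by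
  set ε : ℕ → ℝ := fun m => 1 / (m + 1) / 4
  have hε (m : ℕ) : 0 < ε m ∧ ε m ≤ 1 / 4 := by
    refine ⟨by positivity, div_le_div_of_nonneg_right ?_ (by norm_num)⟩
    exact div_le_one_of_le₀ (by linarith [(m.cast_nonneg : (0 : ℝ) ≤ m)]) (by positivity)
  obtain ⟨P⟩ := Classical.nonempty_pi.2 fun m =>
    nonempty_slopePartition hE hf (hε m).1 (by linarith [(hε m).2])
  refine aemeasurable_of_tendsto_metrizable_ae atTop
    (fun m => (P m).measurable_slopeFun.aemeasurable) ?_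
  filter_upwards [ae_hasApproxDerivAt_approxDeriv hE hdiff, ae_restrict_mem hE] with x hd hxE
  refine tendsto_iff_dist_tendsto_zero.2 (squeeze_zero (fun _ => dist_nonneg)
    (fun m => (P m).abs_slopeFun_sub_le (hε m).1.le (by linarith [(hε m).2]) hxE hd) ?_)
  simpa [ε] using ((tendsto_one_div_add_atTop_nhds_zero_nat.div_const 4).const_mul 2).mul_const
    |approxDeriv E f x|

lemma ENNReal.le_of_forall_le_ofReal_mul {a b : ℝ≥0∞}
    (h : ∀ ε : ℝ, 0 < ε → ε < 1 / 3 → a ≤ ENNReal.ofReal ((1 + ε) / (1 - 3 * ε)) * b) : a ≤ b := by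
  have hlim : Tendsto (fun ε : ℝ => (1 + ε) / (1 - 3 * ε)) (𝓝[>] 0) (𝓝 1) := by
    have : ContinuousAt (fun ε : ℝ => (1 + ε) / (1 - 3 * ε)) 0 := by fun_prop (disch := norm_num)
    simpa using tendsto_nhdsWithin_of_tendsto_nhds this.tendsto
  have := ENNReal.Tendsto.mul_const (ENNReal.tendsto_ofReal hlim) (b := b) (.inl (by simp))
  rw [ENNReal.ofReal_one, one_mul] at this
  refine ge_of_tendsto this ?_
  filter_upwards [Ioo_mem_nhdsGT (by norm_num : (0 : ℝ) < 1 / 3)] with ε hε using h ε hε.1 hε.2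

theorem sum_lintegral_abs_approxDeriv_le {ι : Type*} [Fintype ι] {E : Set ℝ} {f : ι → ℝ → ℝ}
    {K L : ℕ} (hE : MeasurableSet E) (hf : ∀ i, Measurable (f i))
    (hdiff : ∀ i, volume {x ∈ E | ¬∃ a, HasApproxDerivAt E (f i) a x} = 0)
    (hK : ∀ i, ∀ᵐ y, (E ∩ f i ⁻¹' {y}).encard ≤ K)
    (hL : ∀ᵐ y, {i | y ∈ f i '' E}.encard ≤ L) :
    ∑ i, ∫⁻ x in E, ENNReal.ofReal |approxDeriv E (f i) x| ≤
      K * (L * volume (⋃ i, f i '' E)) := by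
  refine ENNReal.le_of_forall_le_ofReal_mul fun ε hε hε' => ?_
  choose W hWf hW hint using fun i =>
    exists_lintegral_abs_approxDeriv_le hE (hf i) (hdiff i) (hK i) hε hε'
  have hmult : ∑ i, volume (W i) ≤ L * volume (⋃ i, W i) := by
    rw [← tsum_fintype (L := .unconditional _)]
    exact tsum_measure_le_of_ae_encard_le hW <| hL.mono fun y hy =>
      (Set.encard_mono fun i hi => hWf i hi).trans hy
  calc ∑ i, ∫⁻ x in E, ENNReal.ofReal |approxDeriv E (f i) x|
      ≤ ∑ i, ENNReal.ofReal ((1 + ε) / (1 - 3 * ε)) * (K * volume (W i)) :=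
        Finset.sum_le_sum fun i _ => hint i
    _ = ENNReal.ofReal ((1 + ε) / (1 - 3 * ε)) * (K * ∑ i, volume (W i)) := by
        rw [Finset.mul_sum, Finset.mul_sum]
    _ ≤ ENNReal.ofReal ((1 + ε) / (1 - 3 * ε)) * (K * (L * volume (⋃ i, f i '' E))) := by
        grw [hmult, Set.iUnion_mono hWf]

lemma sum_integral_abs_lt {α ι : Type*} [MeasurableSpace α] [Fintype ι] [Nonempty ι]
    {μ : Measure α} (hμ : μ ≠ 0) {g G : ι → α → ℝ} {C : ℝ} (hG : ∀ i, AEMeasurable (G i) μ)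
    (hlt : ∀ i, ∀ᵐ x ∂μ, |g i x| < G i x)
    (hsum : ∑ i, ∫⁻ x, ENNReal.ofReal (G i x) ∂μ ≤ ENNReal.ofReal C) :
    ∑ i, ∫ x, |g i x| ∂μ < C := by
  have hG_fin (i : ι) : ∫⁻ x, ENNReal.ofReal (G i x) ∂μ ≠ ∞ :=
    ne_top_of_le_ne_top ENNReal.ofReal_ne_top
      ((Finset.single_le_sum (fun j _ => zero_le) (Finset.mem_univ i)).trans hsum)
  have hstrict (i : ι) :
      ∫⁻ x, ENNReal.ofReal |g i x| ∂μ < ∫⁻ x, ENNReal.ofReal (G i x) ∂μ := by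
    refine lintegral_strict_mono hμ (hG i).ennreal_ofReal (ne_top_of_le_ne_top (hG_fin i) ?_) ?_
    · exact lintegral_mono_ae ((hlt i).mono fun x hx => ENNReal.ofReal_le_ofReal hx.le)
    · exact (hlt i).mono fun x hx =>
        (ENNReal.ofReal_lt_ofReal_iff ((abs_nonneg _).trans_lt hx)).2 hx
  have hlt_sum : ∑ i, ∫⁻ x, ENNReal.ofReal |g i x| ∂μ < ENNReal.ofReal C :=
    (ENNReal.sum_lt_sum_of_nonempty Finset.univ_nonempty fun i _ => hstrict i).trans_le hsum
  calc ∑ i, ∫ x, |g i x| ∂μ ≤ ∑ i, (∫⁻ x, ENNReal.ofReal |g i x| ∂μ).toReal :=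
        Finset.sum_le_sum fun i _ => (le_abs_self _).trans
          (by simpa using norm_integral_le_lintegral_norm (μ := μ) fun x => |g i x|)
    _ = (∑ i, ∫⁻ x, ENNReal.ofReal |g i x| ∂μ).toReal :=
        (ENNReal.toReal_sum fun i _ => (hstrict i).ne_top).symm
    _ < C := ENNReal.toReal_lt_of_lt_ofReal hlt_sum

lemma sum_integral_abs_lt_one {α ι : Type*} [MeasurableSpace α] [Fintype ι] [Nonempty ι]
    {μ : Measure α} (hμ : μ ≠ 0) {g D : ι → α → ℝ} {M : ℝ} (hD : ∀ i, AEMeasurable (D i) μ)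
    (hsum : ∑ i, ∫⁻ x, ENNReal.ofReal |D i x| ∂μ ≤ ENNReal.ofReal M)
    (hlt : ∀ i, ∀ᵐ x ∂μ, |g i x| < 1 / M * |D i x|) : ∑ i, ∫ x, |g i x| ∂μ < 1 := by
  rcases le_or_gt M 0 with hM | hM
  · have := ae_neBot.2 hμ
    obtain ⟨x, hx⟩ := (hlt (Classical.arbitrary ι)).exists
    exact absurd hx (not_lt.2 ((mul_nonpos_of_nonpos_of_nonneg (one_div_nonpos.2 hM)
      (abs_nonneg _)).trans (abs_nonneg _)))
  refine sum_integral_abs_lt hμ (fun i => (hD i).abs.const_mul _) hlt ?_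
  calc ∑ i, ∫⁻ x, ENNReal.ofReal (1 / M * |D i x|) ∂μ
      = ENNReal.ofReal (1 / M) * ∑ i, ∫⁻ x, ENNReal.ofReal |D i x| ∂μ := by
        simp_rw [ENNReal.ofReal_mul (one_div_pos.2 hM).le,
          lintegral_const_mul' _ _ ENNReal.ofReal_ne_top, Finset.mul_sum]
    _ ≤ ENNReal.ofReal (1 / M) * ENNReal.ofReal M := by gcongr
    _ = ENNReal.ofReal 1 := by
        rw [← ENNReal.ofReal_mul (one_div_pos.2 hM).le, one_div_mul_cancel hM.ne']

lemma ae_encard_inter_preimage_le {α : Type*} [MeasurableSpace α] {μ : Measure α} {E : Set α}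
    {f : α → α} {K : ℕ} (hmaps : Set.MapsTo f E E)
    (h : μ {y ∈ E | (K : ℕ∞) < (E ∩ f ⁻¹' {y}).encard} = 0) :
    ∀ᵐ y ∂μ, (E ∩ f ⁻¹' {y}).encard ≤ K := by
  filter_upwards [measure_eq_zero_iff_ae_notMem.1 h] with y hy
  by_cases hyE : y ∈ E
  · exact not_lt.1 fun hK => hy ⟨hyE, hK⟩
  · have hempty : E ∩ f ⁻¹' {y} = ∅ :=
      Set.eq_empty_of_forall_notMem fun x hx => hyE (Set.mem_singleton_iff.1 hx.2 ▸ hmaps hx.1)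
    simp [hempty]

lemma measure_biInter_eq_zero_of_isGreatest {α : Type*} [MeasurableSpace α] {μ : Measure α}
    {N L : ℕ} {A : Fin N → Set α}
    (hL : IsGreatest {m : ℕ | 1 ≤ m ∧ m ≤ N ∧
      ∃ s : Finset (Fin N), s.card = m ∧ 0 < μ (⋂ n ∈ s, A n)} L)
    (s : Finset (Fin N)) (hs : s.card = L + 1) : μ (⋂ n ∈ s, A n) = 0 := by
  refine nonpos_iff_eq_zero.1 (not_lt.1 fun hpos => ?_)
  have := hL.2 ⟨by omega, hs ▸ (Finset.card_le_univ s).trans (Fintype.card_fin N).le, s, hs, hpos⟩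
  omega

theorem stmt10_general (N : ℕ) (f g' : Fin N → ℝ → ℝ)
    (hfmeas : ∀ n, Measurable (f n))
    (hmaps : ∀ n, MapsTo (f n) (Icc 0 1) (Icc 0 1))
    (H1diff : ∀ n,
      MeasureTheory.volume {x ∈ Icc (0 : ℝ) 1 | ¬∃ a, HasApproxDerivAt (Icc 0 1) (f n) a x} = 0)
    (K : ℕ)
    (H2 : ∀ n,
      MeasureTheory.volume {y ∈ Icc (0 : ℝ) 1 | (K : ℕ∞) < (Icc (0 : ℝ) 1 ∩ f n ⁻¹' {y}).encard} = 0)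
    (L : ℕ)
    (hL : IsGreatest {m : ℕ | 1 ≤ m ∧ m ≤ N ∧
      ∃ s : Finset (Fin N), s.card = m ∧
        0 < MeasureTheory.volume (⋂ n ∈ s, f n '' Icc (0 : ℝ) 1)} L)
    -- |gₙ(x)| < (1/(KL)) |fₙ'(x)| a.e.
    (hC1 : ∀ n, ∀ᵐ x ∂μ01,
      |g' n x| < 1 / ((K : ℝ) * (L : ℝ)) * |approxDeriv (Icc 0 1) (f n) x|) :
    ∑ n : Fin N, ∫ x in Icc (0 : ℝ) 1, |g' n x| < 1 := by
  have : Nonempty (Fin N) := ⟨⟨0, hL.1.1.trans hL.1.2.1⟩⟩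
  refine sum_integral_abs_lt_one (by simp)
    (fun n => aemeasurable_approxDeriv measurableSet_Icc (hfmeas n) (H1diff n)) ?_ hC1
  calc ∑ n, ∫⁻ x in Icc 0 1, ENNReal.ofReal |approxDeriv (Icc 0 1) (f n) x|
      ≤ K * (L * volume (⋃ n, f n '' Icc 0 1)) :=
        sum_lintegral_abs_approxDeriv_le measurableSet_Icc hfmeas H1diff
          (fun n => ae_encard_inter_preimage_le (hmaps n) (H2 n))
          (ae_encard_setOf_mem_le (measure_biInter_eq_zero_of_isGreatest hL))
    _ ≤ K * (L * volume (Icc (0 : ℝ) 1)) := by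
        gcongr; exact Set.iUnion_subset fun n => (hmaps n).image_subset
    _ = ENNReal.ofReal (K * L) := by simp [ENNReal.ofReal_mul]

theorem stmt10 (N : ℕ) (f g' : Fin N → ℝ → ℝ)
    (hfmeas : ∀ n, Measurable (f n)) (hgmeas : ∀ n, Measurable (g' n))
    (hmaps : ∀ n, MapsTo (f n) (Icc 0 1) (Icc 0 1))
    (H1diff : ∀ n,
      MeasureTheory.volume {x ∈ Icc (0 : ℝ) 1 | ¬∃ a, HasApproxDerivAt (Icc 0 1) (f n) a x} = 0)
    (H1LuzinN : ∀ n, ∀ A ⊆ Icc (0 : ℝ) 1,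
      MeasureTheory.volume A = 0 → MeasureTheory.volume (f n '' A) = 0)
    (K : ℕ)
    (H2 : ∀ n,
      MeasureTheory.volume {y ∈ Icc (0 : ℝ) 1 | (K : ℕ∞) < (Icc (0 : ℝ) 1 ∩ f n ⁻¹' {y}).encard} = 0)
    (H3 : ∀ n, ∀ A : Set ℝ,
      MeasureTheory.volume A = 0 → MeasureTheory.volume (Icc (0 : ℝ) 1 ∩ f n ⁻¹' A) = 0)
    (L : ℕ)
    (hL : IsGreatest {m : ℕ | 1 ≤ m ∧ m ≤ N ∧
      ∃ s : Finset (Fin N), s.card = m ∧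
        0 < MeasureTheory.volume (⋂ n ∈ s, f n '' Icc (0 : ℝ) 1)} L)
    -- |gₙ(x)| < (1/(KL)) |fₙ'(x)| a.e.
    (hC1 : ∀ n, ∀ᵐ x ∂μ01,
      |g' n x| < 1 / ((K : ℝ) * (L : ℝ)) * |approxDeriv (Icc 0 1) (f n) x|) :
    ∑ n : Fin N, ∫ x in Icc (0 : ℝ) 1, |g' n x| < 1 :=
  stmt10_general N f g' hfmeas hmaps H1diff K H2 L hL hC1
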